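/- (Gauge transformation reducing a phased CMV operator to an ordinary CMV operator.) Let α : ℤ → ℂ with |α_n| < 1 and λ : ℤ → ℂ with |λ_n| = 1 for all n. Define γ : ℤ → ℂ by γ_0 = γ_1 = 1 and the two-sided recursions γ_{2n+2} = λ_{2n+1}λ_{2n}γ_{2n} and γ_{2n+1} = conj(λ_{2n}λ_{2n−1})γ_{2n−1} for all n ∈ ℤ, and let Γ be the diagonal unitary operator on ℓ²(ℤ,ℂ) with Γδ_n = γ_n·δ_n. Then Γ·ℰ_{α,λ}·Γ* = ℰ_{α',1}, the phased CMV operator with all phases equal to 1 (an ordinary extended CMV matrix) and coefficients α'_{2n−1} = λ_{2n}λ_{2n−1}·γ_{2n+1}·conj(γ_{2n})·α_{2n−1} and α'_{2n} = conj(λ_{2n}λ_{2n−1}γ_{2n})·γ_{2n−1}·α_{2n} for all n ∈ ℤ (note |α'_n| = |α_n|). -/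

import Mathlib

noncomputable section
open scoped ENNReal
open MeasureTheory

/-- The Hilbert space ℓ²(ℤ, ℂ). -/
abbrev l2Z := lp (fun _ : ℤ => ℂ) 2

/-- ρ = √(1 − |α|²). -/
def rho (w : ℂ) : ℝ := Real.sqrt (1 - ‖w‖ ^ 2)

/-- `L` acts as the direct sum of the blocks Θ(α_{2j}, λ_{2j}). -/
def IsLOp (a lam : ℤ → ℂ) (L : l2Z →L[ℂ] l2Z) : Prop :=
  ∀ (u : l2Z) (j : ℤ),
    L u (2 * j) = lam (2 * j) *
        ((starRingEnd ℂ) (a (2 * j)) * u (2 * j) + (rho (a (2 * j)) : ℂ) * u (2 * j + 1)) ∧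
    L u (2 * j + 1) = lam (2 * j) *
        ((rho (a (2 * j)) : ℂ) * u (2 * j) - a (2 * j) * u (2 * j + 1))

/-- `M` acts as the direct sum of the blocks Θ(α_{2j+1}, λ_{2j+1}). -/
def IsMOp (a lam : ℤ → ℂ) (M : l2Z →L[ℂ] l2Z) : Prop :=
  ∀ (u : l2Z) (j : ℤ),
    M u (2 * j + 1) = lam (2 * j + 1) *
        ((starRingEnd ℂ) (a (2 * j + 1)) * u (2 * j + 1) +
          (rho (a (2 * j + 1)) : ℂ) * u (2 * j + 2)) ∧
    M u (2 * j + 2) = lam (2 * j + 1) *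
        ((rho (a (2 * j + 1)) : ℂ) * u (2 * j + 1) - a (2 * j + 1) * u (2 * j + 2))

/-- `E` is the phased CMV operator ℰ_{α,λ} = ℒℳ. -/
def IsPCMV (a lam : ℤ → ℂ) (E : l2Z →L[ℂ] l2Z) : Prop :=
  (∀ n, ‖a n‖ < 1) ∧ (∀ n, ‖lam n‖ = 1) ∧
    ∃ L M : l2Z →L[ℂ] l2Z, IsLOp a lam L ∧ IsMOp a lam M ∧ E = L.comp M

/-- P(q, r): q-periodic phased CMV operators with ‖α‖∞ ≤ r. -/
def PCMVPer (q : ℕ) (r : ℝ) : Set (l2Z →L[ℂ] l2Z) :=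
  {E | ∃ a lam : ℤ → ℂ, IsPCMV a lam E ∧
        (∀ n : ℤ, a (n + q) = a n ∧ lam (n + q) = lam n) ∧
        ∀ n, ‖a n‖ ≤ r}

/-- P(r): periodic phased CMV operators with ‖α‖∞ ≤ r. -/
def PCMVPeriodic (r : ℝ) : Set (l2Z →L[ℂ] l2Z) := ⋃ q ∈ Set.Ici 1, PCMVPer q r

/-- LP(r): norm closure of P(r). -/
def LPr (r : ℝ) : Set (l2Z →L[ℂ] l2Z) := closure (PCMVPeriodic r)

/-- LP: the space of limit-periodic phased CMV operators. -/
def LP : Set (l2Z →L[ℂ] l2Z) := ⋃ r ∈ Set.Ioo (0 : ℝ) 1, LPr r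

/-- Arc-length measure on the unit circle ∂𝔻 ⊆ ℂ, the pushforward of Lebesgue
measure on [0, 2π) under τ ↦ e^{iτ}. -/
def circleLeb : Measure ℂ :=
  Measure.map (fun τ : ℝ => Complex.exp (Complex.I * τ))
    (volume.restrict (Set.Ico 0 (2 * Real.pi)))

/-!
Both `ℒ` and `ℳ` are direct sums of 2 × 2 blocks `λ [[conj α, ρ], [ρ, -α]]`. Multiplying such a
block on both sides by unit diagonal matrices gives a block of the same form with phase `1` as
soon as both its `ρ`-entries stay `ρ`; the diagonal entries then determine the new coefficient
`α'`, which has the same modulus and hence the same `ρ`. So it suffices to find a unit diagonal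
gauge `Δ = diag(δ)` with `Γ ℒ Δ* = ℒ'` and `Δ ℳ Γ* = ℳ'`. The `ρ`-entries of `ℒ` force
`δ_{2j} = γ_{2j+1} λ_{2j}` and `δ_{2j+1} = γ_{2j+2} conj λ_{2j+1}`, and the recursions defining
`γ` are exactly what makes the `ρ`-entries of `Δ ℳ Γ*` come out right.
-/

open ComplexConjugate

theorem mul_conj_eq_one_of_norm_eq_one {z : ℂ} (hz : ‖z‖ = 1) : z * conj z = 1 := by
  rw [Complex.mul_conj', hz]; norm_num

theorem rho_conj_mul_mul {p q : ℂ} (hp : ‖p‖ = 1) (hq : ‖q‖ = 1) (α : ℂ) :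
    rho (conj p * q * α) = rho α := by
  simp [rho, hp, hq]

theorem norm_eq_norm_zero_of_norm_succ {f : ℤ → ℂ} (h : ∀ k, ‖f (k + 1)‖ = ‖f k‖) (k : ℤ) :
    ‖f k‖ = ‖f 0‖ := by
  have hper : Function.Periodic (fun k => ‖f k‖) 1 := h
  simpa using hper.zsmul k 0

/-- The two rows of `diag(p, q) · lam [[conj α, c], [c, -α]] · diag(r, s)*` applied to `(x, y)`. -/
theorem gauge_block {p q r s lam α α' c x y : ℂ} (hp : ‖p‖ = 1) (hq : ‖q‖ = 1)
    (hps : p * lam * conj s = 1) (hqr : q * lam * conj r = 1) (hα : α' = conj p * q * α) :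
    p * (lam * (conj α * (conj r * x) + c * (conj s * y))) = conj α' * x + c * y ∧
      q * (lam * (c * (conj r * x) - α * (conj s * y))) = c * x - α' * y := by
  have hp' := mul_conj_eq_one_of_norm_eq_one hp
  have hq' := mul_conj_eq_one_of_norm_eq_one hq
  subst hα
  simp only [map_mul, Complex.conj_conj]
  constructor
  · linear_combination
      c * y * hps + p * conj α * x * conj q * hqr - p * conj α * x * lam * conj r * hq'
  · linear_combination
      c * x * hqr - q * α * y * conj p * hps + q * α * y * lam * conj s * hp'

theorem diag_adjoint_apply {γ : ℤ → ℂ} {Γ : l2Z →L[ℂ] l2Z}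
    (hΓ : ∀ (u : l2Z) (n : ℤ), Γ u n = γ n * u n) (u : l2Z) (n : ℤ) :
    ContinuousLinearMap.adjoint Γ u n = conj (γ n) * u n := by
  have hΓsingle : Γ (lp.single 2 n 1) = lp.single 2 n (γ n) := by
    ext m
    rw [hΓ]
    by_cases h : m = n
    · subst h; simp
    · simp [h]
  have h := ContinuousLinearMap.adjoint_inner_right Γ (lp.single 2 n 1) u
  rw [hΓsingle, lp.inner_single_left, lp.inner_single_left] at h
  simpa [mul_comm] using h

/-- `diag(p) ∘ X ∘ diag(r)* = Y`, stated entrywise so that the diagonal factors need not be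
bounded operators given in advance. -/
def DiagConjugate (p r : ℤ → ℂ) (X Y : l2Z →L[ℂ] l2Z) : Prop :=
  ∀ u v : l2Z, (∀ n, v n = conj (r n) * u n) → ∀ n, p n * X v n = Y u n

theorem DiagConjugate.comp {p r s : ℤ → ℂ} {X X' Y Y' : l2Z →L[ℂ] l2Z}
    (h : DiagConjugate p r X Y) (h' : DiagConjugate r s X' Y') (hr : ∀ n, ‖r n‖ = 1) :
    DiagConjugate p s (X.comp X') (Y.comp Y') := by
  intro u v hv n
  refine h (Y' u) (X' v) (fun m => ?_) n
  rw [← h' u v hv m, ← mul_assoc, mul_comm (conj _), mul_conj_eq_one_of_norm_eq_one (hr m),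
    one_mul]

theorem DiagConjugate.comp_adjoint_eq {γ : ℤ → ℂ} {Γ E E' : l2Z →L[ℂ] l2Z}
    (hΓ : ∀ (u : l2Z) (n : ℤ), Γ u n = γ n * u n) (h : DiagConjugate γ γ E E') :
    Γ.comp (E.comp (ContinuousLinearMap.adjoint Γ)) = E' := by
  ext u n
  simp only [ContinuousLinearMap.comp_apply, hΓ]
  exact h u _ (diag_adjoint_apply hΓ u) n

theorem IsLOp.diagConjugate {a a' lam p r : ℤ → ℂ} {L L' : l2Z →L[ℂ] l2Z}
    (hL : IsLOp a lam L) (hL' : IsLOp a' (fun _ => 1) L') (hp : ∀ n, ‖p n‖ = 1)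
    (hs : ∀ j, p (2 * j) * lam (2 * j) * conj (r (2 * j + 1)) = 1)
    (hr : ∀ j, p (2 * j + 1) * lam (2 * j) * conj (r (2 * j)) = 1)
    (ha' : ∀ j, a' (2 * j) = conj (p (2 * j)) * p (2 * j + 1) * a (2 * j)) :
    DiagConjugate p r L L' := by
  intro u v hv n
  obtain ⟨j, rfl | rfl⟩ := Int.even_or_odd' n
  · rw [(hL v j).1, (hL' u j).1, hv, hv, one_mul, ha', rho_conj_mul_mul (hp _) (hp _)]
    exact (gauge_block (hp _) (hp _) (hs j) (hr j) rfl).1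
  · rw [(hL v j).2, (hL' u j).2, hv, hv, one_mul, ha', rho_conj_mul_mul (hp _) (hp _)]
    exact (gauge_block (hp _) (hp _) (hs j) (hr j) rfl).2

theorem IsMOp.diagConjugate {a a' lam p r : ℤ → ℂ} {M M' : l2Z →L[ℂ] l2Z}
    (hM : IsMOp a lam M) (hM' : IsMOp a' (fun _ => 1) M') (hp : ∀ n, ‖p n‖ = 1)
    (hs : ∀ k, p (2 * k - 1) * lam (2 * k - 1) * conj (r (2 * k)) = 1)
    (hr : ∀ k, p (2 * k) * lam (2 * k - 1) * conj (r (2 * k - 1)) = 1)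
    (ha' : ∀ k, a' (2 * k - 1) = conj (p (2 * k - 1)) * p (2 * k) * a (2 * k - 1)) :
    DiagConjugate p r M M' := by
  intro u v hv n
  obtain ⟨k, hk⟩ : ∃ k, n = 2 * k - 1 ∨ n = 2 * k := by
    obtain ⟨j, hj | hj⟩ := Int.even_or_odd' n
    exacts [⟨j, .inr hj⟩, ⟨j + 1, .inl (by omega)⟩]
  have hblock := hM v (k - 1)
  have hblock' := hM' u (k - 1)
  rw [show 2 * (k - 1) + 1 = 2 * k - 1 by ring, show 2 * (k - 1) + 2 = 2 * k by ring]
    at hblock hblock'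
  rcases hk with rfl | rfl
  · rw [hblock.1, hblock'.1, hv, hv, one_mul, ha', rho_conj_mul_mul (hp _) (hp _)]
    exact (gauge_block (hp _) (hp _) (hs k) (hr k) rfl).1
  · rw [hblock.2, hblock'.2, hv, hv, one_mul, ha', rho_conj_mul_mul (hp _) (hp _)]
    exact (gauge_block (hp _) (hp _) (hs k) (hr k) rfl).2

theorem norm_gauge_eq_one {lam γ : ℤ → ℂ} (hl : ∀ n, ‖lam n‖ = 1) (hγ0 : γ 0 = 1)
    (hγ1 : γ 1 = 1)
    (hγeven : ∀ n : ℤ, γ (2 * n + 2) = lam (2 * n + 1) * lam (2 * n) * γ (2 * n))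
    (hγodd : ∀ n : ℤ,
      γ (2 * n + 1) = conj (lam (2 * n) * lam (2 * n - 1)) * γ (2 * n - 1))
    (n : ℤ) : ‖γ n‖ = 1 := by
  have heven : ∀ k, ‖γ (2 * k)‖ = 1 := fun k => by
    refine (norm_eq_norm_zero_of_norm_succ (f := fun k => γ (2 * k)) (fun k => ?_) k).trans
      (by simp [hγ0])
    rw [mul_add, mul_one, hγeven]
    simp [hl]
  have hodd : ∀ k, ‖γ (2 * k + 1)‖ = 1 := fun k => by
    refine (norm_eq_norm_zero_of_norm_succ (f := fun k => γ (2 * k + 1)) (fun k => ?_) k).trans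
      (by simp [hγ1])
    rw [hγodd, show 2 * (k + 1) - 1 = 2 * k + 1 by ring]
    simp [hl]
  obtain ⟨k, rfl | rfl⟩ := Int.even_or_odd' n
  exacts [heven k, hodd k]

def gaugeMid (lam γ : ℤ → ℂ) (n : ℤ) : ℂ :=
  if Even n then γ (n + 1) * lam n else γ (n + 1) * conj (lam n)

theorem gaugeMid_two_mul (lam γ : ℤ → ℂ) (j : ℤ) :
    gaugeMid lam γ (2 * j) = γ (2 * j + 1) * lam (2 * j) := by
  simp [gaugeMid]

theorem gaugeMid_two_mul_add_one (lam γ : ℤ → ℂ) (j : ℤ) :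
    gaugeMid lam γ (2 * j + 1) = γ (2 * j + 2) * conj (lam (2 * j + 1)) := by
  simp [gaugeMid, parity_simps, add_assoc, one_add_one_eq_two]

theorem gaugeMid_two_mul_sub_one (lam γ : ℤ → ℂ) (j : ℤ) :
    gaugeMid lam γ (2 * j - 1) = γ (2 * j) * conj (lam (2 * j - 1)) := by
  simp [gaugeMid, parity_simps]

theorem norm_gaugeMid {lam γ : ℤ → ℂ} (hl : ∀ n, ‖lam n‖ = 1) (hγ : ∀ n, ‖γ n‖ = 1) (n : ℤ) :
    ‖gaugeMid lam γ n‖ = 1 := by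
  unfold gaugeMid
  split_ifs <;> simp [hγ, hl]

theorem IsLOp.diagConjugate_gaugeMid {a a' lam γ : ℤ → ℂ} {L L' : l2Z →L[ℂ] l2Z}
    (hL : IsLOp a lam L) (hL' : IsLOp a' (fun _ => 1) L') (hl : ∀ n, ‖lam n‖ = 1)
    (hγ : ∀ n, ‖γ n‖ = 1)
    (hγeven : ∀ n : ℤ, γ (2 * n + 2) = lam (2 * n + 1) * lam (2 * n) * γ (2 * n))
    (hγodd : ∀ n : ℤ,
      γ (2 * n + 1) = conj (lam (2 * n) * lam (2 * n - 1)) * γ (2 * n - 1))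
    (ha'even : ∀ n : ℤ, a' (2 * n) =
      conj (lam (2 * n) * lam (2 * n - 1) * γ (2 * n)) * γ (2 * n - 1) * a (2 * n)) :
    DiagConjugate γ (gaugeMid lam γ) L L' := by
  have hlam n := mul_conj_eq_one_of_norm_eq_one (hl n)
  have hgam n := mul_conj_eq_one_of_norm_eq_one (hγ n)
  refine hL.diagConjugate hL' hγ (fun j => ?_) (fun j => ?_) (fun j => ?_)
  · rw [gaugeMid_two_mul_add_one, hγeven]
    simp only [map_mul, Complex.conj_conj]
    linear_combination lam (2 * j) * conj (lam (2 * j)) * hgam (2 * j) + hlam (2 * j) +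
      lam (2 * j) * conj (lam (2 * j)) * γ (2 * j) * conj (γ (2 * j)) * hlam (2 * j + 1)
  · rw [gaugeMid_two_mul]
    simp only [map_mul]
    linear_combination lam (2 * j) * conj (lam (2 * j)) * hgam (2 * j + 1) + hlam (2 * j)
  · rw [ha'even, hγodd]
    simp only [map_mul]
    ring

theorem IsMOp.diagConjugate_gaugeMid {a a' lam γ : ℤ → ℂ} {M M' : l2Z →L[ℂ] l2Z}
    (hM : IsMOp a lam M) (hM' : IsMOp a' (fun _ => 1) M') (hl : ∀ n, ‖lam n‖ = 1)
    (hγ : ∀ n, ‖γ n‖ = 1)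
    (hγodd : ∀ n : ℤ,
      γ (2 * n + 1) = conj (lam (2 * n) * lam (2 * n - 1)) * γ (2 * n - 1))
    (ha'odd : ∀ n : ℤ, a' (2 * n - 1) =
      lam (2 * n) * lam (2 * n - 1) * γ (2 * n + 1) * conj (γ (2 * n)) * a (2 * n - 1)) :
    DiagConjugate (gaugeMid lam γ) γ M M' := by
  have hlam n := mul_conj_eq_one_of_norm_eq_one (hl n)
  have hgam n := mul_conj_eq_one_of_norm_eq_one (hγ n)
  refine hM.diagConjugate hM' (norm_gaugeMid hl hγ) (fun k => ?_) (fun k => ?_) (fun k => ?_)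
  · rw [gaugeMid_two_mul_sub_one]
    linear_combination lam (2 * k - 1) * conj (lam (2 * k - 1)) * hgam (2 * k) +
      hlam (2 * k - 1)
  · rw [gaugeMid_two_mul, hγodd]
    simp only [map_mul]
    linear_combination lam (2 * k) * conj (lam (2 * k)) * lam (2 * k - 1) *
        conj (lam (2 * k - 1)) * hgam (2 * k - 1) +
      lam (2 * k - 1) * conj (lam (2 * k - 1)) * hlam (2 * k) + hlam (2 * k - 1)
  · rw [ha'odd, gaugeMid_two_mul_sub_one, gaugeMid_two_mul]
    simp only [map_mul, Complex.conj_conj]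
    ring

theorem gauge_transformation_general
    (a lam : ℤ → ℂ)
    (hl : ∀ n, ‖lam n‖ = 1)
    (γ : ℤ → ℂ) (hγ0 : γ 0 = 1) (hγ1 : γ 1 = 1)
    (hγeven : ∀ n : ℤ, γ (2 * n + 2) = lam (2 * n + 1) * lam (2 * n) * γ (2 * n))
    (hγodd : ∀ n : ℤ,
      γ (2 * n + 1) = (starRingEnd ℂ) (lam (2 * n) * lam (2 * n - 1)) * γ (2 * n - 1))
    (Γ : l2Z →L[ℂ] l2Z) (hΓ : ∀ (u : l2Z) (n : ℤ), Γ u n = γ n * u n)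
    (a' : ℤ → ℂ)
    (ha'odd : ∀ n : ℤ, a' (2 * n - 1) =
      lam (2 * n) * lam (2 * n - 1) * γ (2 * n + 1) * (starRingEnd ℂ) (γ (2 * n)) *
        a (2 * n - 1))
    (ha'even : ∀ n : ℤ, a' (2 * n) =
      (starRingEnd ℂ) (lam (2 * n) * lam (2 * n - 1) * γ (2 * n)) * γ (2 * n - 1) *
        a (2 * n))
    (E E' : l2Z →L[ℂ] l2Z)
    (hE : IsPCMV a lam E) (hE' : IsPCMV a' (fun _ => 1) E') :
    Γ.comp (E.comp (ContinuousLinearMap.adjoint Γ)) = E' := by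
  obtain ⟨-, -, L, M, hL, hM, rfl⟩ := hE
  obtain ⟨-, -, L', M', hL', hM', rfl⟩ := hE'
  have hγ := norm_gauge_eq_one hl hγ0 hγ1 hγeven hγodd
  refine DiagConjugate.comp_adjoint_eq hΓ (DiagConjugate.comp ?_ ?_ (norm_gaugeMid hl hγ))
  · exact hL.diagConjugate_gaugeMid hL' hl hγ hγeven hγodd ha'even
  · exact hM.diagConjugate_gaugeMid hM' hl hγ hγodd ha'odd

/-- gauge transformation. With γ defined by γ_0 = γ_1 = 1,
γ_{2n+2} = λ_{2n+1}λ_{2n}γ_{2n}, γ_{2n+1} = conj(λ_{2n}λ_{2n−1})γ_{2n−1}, and Γ the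
diagonal operator Γδ_n = γ_n δ_n, one has Γ·ℰ_{α,λ}·Γ* = ℰ_{α′,1} with the indicated
coefficients α′. -/
theorem gauge_transformation
    (a lam : ℤ → ℂ)
    (ha : ∀ n, ‖a n‖ < 1) (hl : ∀ n, ‖lam n‖ = 1)
    (γ : ℤ → ℂ) (hγ0 : γ 0 = 1) (hγ1 : γ 1 = 1)
    (hγeven : ∀ n : ℤ, γ (2 * n + 2) = lam (2 * n + 1) * lam (2 * n) * γ (2 * n))
    (hγodd : ∀ n : ℤ,
      γ (2 * n + 1) = (starRingEnd ℂ) (lam (2 * n) * lam (2 * n - 1)) * γ (2 * n - 1))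
    (Γ : l2Z →L[ℂ] l2Z) (hΓ : ∀ (u : l2Z) (n : ℤ), Γ u n = γ n * u n)
    (a' : ℤ → ℂ)
    (ha'odd : ∀ n : ℤ, a' (2 * n - 1) =
      lam (2 * n) * lam (2 * n - 1) * γ (2 * n + 1) * (starRingEnd ℂ) (γ (2 * n)) *
        a (2 * n - 1))
    (ha'even : ∀ n : ℤ, a' (2 * n) =
      (starRingEnd ℂ) (lam (2 * n) * lam (2 * n - 1) * γ (2 * n)) * γ (2 * n - 1) *
        a (2 * n))
    (E E' : l2Z →L[ℂ] l2Z)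
    (hE : IsPCMV a lam E) (hE' : IsPCMV a' (fun _ => 1) E') :
    Γ.comp (E.comp (ContinuousLinearMap.adjoint Γ)) = E' :=
  gauge_transformation_general a lam hl γ hγ0 hγ1 hγeven hγodd Γ hΓ a' ha'odd ha'even E E' hE hE'
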